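/- arXiv:1707.03265 — 2 statements merged into one kernel-verified Lean document; each statement's English description precedes it below -/
import Mathlib

section
/- For all positive integers n, n! ≥ n^n / 2^{n−1+G(n)}, where G(n) = ∑_{m ≤ n} {log(n/m)/log 2}. -/
/-!
Split `log₂ (n / m) = ⌊log₂ (n / m)⌋ + {log₂ (n / m)}` and sum over `m`. The logarithms add up
to `log₂ (nⁿ / n!)`. Since `⌊log₂ (n / m)⌋ = Nat.log 2 ⌊n / m⌋`, counting the pairs `(m, k)` with
`m * 2 ^ k ≤ n` in two ways turns the sum of the floors into Legendre's `∑ₖ ⌊n / 2ᵏ⌋ = v₂(n!)`,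
which is less than `n`. Hence `log₂ (nⁿ / n!) = v₂(n!) + G(n) ≤ n - 1 + G(n)`.
-/

open Finset Real
open scoped Nat

namespace Nat

theorem log_eq_card_filter_pow_le {b m K : ℕ} (hb : 1 < b) (hK : log b m ≤ K) :
    log b m = #{k ∈ Icc 1 K | b ^ k ≤ m} := by
  rcases eq_or_ne m 0 with rfl | hm
  · simp [(zero_lt_of_lt hb).ne']
  have : {k ∈ Icc 1 K | b ^ k ≤ m} = Icc 1 (log b m) := by
    ext k
    simp only [mem_filter, mem_Icc, ← le_log_iff_pow_le hb hm]
    omega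
  simp [this]

theorem card_filter_pow_le_div {b : ℕ} (hb : 0 < b) (k n : ℕ) :
    #{m ∈ Icc 1 n | b ^ k ≤ n / m} = n / b ^ k := by
  have hbk : 0 < b ^ k := pow_pos hb k
  have : {m ∈ Icc 1 n | b ^ k ≤ n / m} = Icc 1 (n / b ^ k) := by
    ext m
    simp only [mem_filter, mem_Icc]
    constructor
    · rintro ⟨⟨hm, -⟩, h⟩
      exact ⟨hm, (le_div_iff_mul_le hbk).2 (mul_comm m _ ▸ (le_div_iff_mul_le hm).1 h)⟩
    · rintro ⟨hm, h⟩
      exact ⟨⟨hm, h.trans (div_le_self _ _)⟩,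
        (le_div_iff_mul_le hm).2 (mul_comm (b ^ k) _ ▸ (le_div_iff_mul_le hbk).1 h)⟩
  simp [this]

/-- Both sides count the pairs `(m, k)` with `m, k ≥ 1` and `m * b ^ k ≤ n`. -/
theorem sum_log_div_eq_sum_div_pow {b : ℕ} (hb : 1 < b) (n : ℕ) :
    ∑ m ∈ Icc 1 n, log b (n / m) = ∑ k ∈ Icc 1 (log b n), n / b ^ k := by
  calc ∑ m ∈ Icc 1 n, log b (n / m)
      = ∑ m ∈ Icc 1 n, #{k ∈ Icc 1 (log b n) | b ^ k ≤ n / m} :=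
        sum_congr rfl fun m _ ↦ log_eq_card_filter_pow_le hb (log_mono_right (div_le_self _ _))
    _ = ∑ k ∈ Icc 1 (log b n), #{m ∈ Icc 1 n | b ^ k ≤ n / m} :=
        sum_card_bipartiteAbove_eq_sum_card_bipartiteBelow _
    _ = ∑ k ∈ Icc 1 (log b n), n / b ^ k :=
        sum_congr rfl fun k _ ↦ card_filter_pow_le_div (zero_lt_of_lt hb) k n

theorem sum_log_div_eq_padicValNat_factorial (p n : ℕ) [hp : Fact p.Prime] :
    ∑ m ∈ Icc 1 n, log p (n / m) = padicValNat p n ! := by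
  rw [sum_log_div_eq_sum_div_pow hp.out.one_lt, padicValNat_factorial (lt_add_one _),
    Ico_add_one_right_eq_Icc]

end Nat

namespace Real

theorem floor_logb_natCast_div_natCast (b : ℕ) {m n : ℕ} (hm : 0 < m) (hmn : m ≤ n) :
    ⌊logb b ((n : ℝ) / m)⌋ = Nat.log b (n / m) := by
  have : (1 : ℝ) ≤ n / m := by
    rw [one_le_div (by positivity)]
    exact_mod_cast hmn
  rw [floor_logb_natCast (by positivity), Int.log_of_one_le_right b this, Nat.floor_div_eq_div]

theorem sum_logb_div_eq_logb_pow_div_factorial (b : ℝ) (n : ℕ) :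
    ∑ m ∈ Icc 1 n, logb b (n / m) = logb b (n ^ n / n !) := by
  rw [← logb_prod]
  · rw [prod_div_distrib, prod_const, Nat.card_Icc, add_tsub_cancel_right, ← Nat.cast_prod,
      ← Ico_add_one_right_eq_Icc, Finset.prod_Ico_id_eq_factorial]
  · intro m hm
    obtain ⟨hm1, hmn⟩ := mem_Icc.1 hm
    have : (0 : ℝ) < m := by exact_mod_cast hm1
    have : (0 : ℝ) < n := by exact_mod_cast lt_of_lt_of_le hm1 hmn
    positivity

theorem logb_pow_div_factorial_eq (p n : ℕ) [Fact p.Prime] :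
    logb p (n ^ n / n !) = padicValNat p n ! + ∑ m ∈ Icc 1 n, Int.fract (logb p (n / m)) := by
  have hfloor : ∀ m ∈ Icc 1 n, (⌊logb p ((n : ℝ) / m)⌋ : ℝ) = Nat.log p (n / m) := fun m hm ↦ by
    obtain ⟨hm1, hmn⟩ := mem_Icc.1 hm
    exact_mod_cast floor_logb_natCast_div_natCast p hm1 hmn
  rw [← Nat.sum_log_div_eq_padicValNat_factorial, ← sum_logb_div_eq_logb_pow_div_factorial]
  simp only [Int.fract, sum_sub_distrib, sum_congr rfl hfloor]
  push_cast
  ring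

end Real

theorem stmt_5 (n : ℕ) (hn : 0 < n) :
    (n.factorial : ℝ) ≥
      (n : ℝ) ^ n /
        (2 : ℝ) ^ ((n : ℝ) - 1 +
          ∑ m ∈ Finset.Icc 1 n, Int.fract (Real.log ((n : ℝ) / (m : ℝ)) / Real.log 2)) := by
  have hv : (padicValNat 2 n ! : ℝ) ≤ n - 1 := by
    have : padicValNat 2 n ! + 1 ≤ n := padicValNat_factorial_lt_of_ne_zero 2 hn.ne'
    have : (padicValNat 2 n ! : ℝ) + 1 ≤ n := by exact_mod_cast this
    linarith
  simp_rw [log_div_log]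
  rw [ge_iff_le, div_le_iff₀ (by positivity), ← div_le_iff₀' (by positivity)]
  calc (n : ℝ) ^ n / n ! = 2 ^ logb 2 (n ^ n / n !) :=
        (rpow_logb two_pos (by norm_num) (by positivity)).symm
    _ = 2 ^ (padicValNat 2 n ! + ∑ m ∈ Icc 1 n, Int.fract (logb 2 (n / m))) := by
        rw [← Nat.cast_ofNat, logb_pow_div_factorial_eq]
    _ ≤ _ := by gcongr; norm_num
end

section
/- For every odd positive integer a, ∑_{1 ≤ j ≤ a, j odd} ⌊log₂(a/j)⌋ = ∑_{1 ≤ j ≤ a, j odd} (log₂(a/j) − {log₂(a/j)}), and consequently log 2 · (a−1)/2 = ∑_{1 ≤ j ≤ a, j odd} log(a/j) − log 2 · ∑_{1 ≤ j ≤ a, j odd} {log₂(a/j)}. -/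
/-!
Every `m ∈ [1, a]` is uniquely `2 ^ k * j` with `j` odd, so the even ones are counted by the pairs
`(j, k)` with `j` odd, `k ≥ 1` and `2 ^ k ≤ a / j`. For fixed `j` there are `⌊log₂ (a / j)⌋` such `k`,
hence `∑ ⌊log₂ (a / j)⌋ = ⌊a / 2⌋ = (a - 1) / 2`. Both identities follow by writing
`⌊x⌋ = x - {x}` termwise.
-/

open Finset

lemma factorization_two_pow_mul_of_odd (k : ℕ) {j : ℕ} (hj : Odd j) :
    (2 ^ k * j).factorization 2 = k := by
  rw [Nat.factorization_mul (by positivity) (by rintro rfl; simp at hj),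
    Nat.Prime.factorization_pow Nat.prime_two, Finsupp.add_apply, Finsupp.single_eq_same,
    Nat.factorization_eq_zero_of_not_dvd hj.not_two_dvd_nat, add_zero]

lemma card_filter_ordCompl_two_eq_of_odd {a j : ℕ} (hj : Odd j) :
    #{m ∈ {m ∈ Icc 1 a | 2 ∣ m} | ordCompl[2] m = j} = Nat.log 2 (a / j) := by
  have hj0 : 0 < j := hj.pos
  have hj2 : ¬ 2 ∣ j := hj.not_two_dvd_nat
  rw [show Nat.log 2 (a / j) = #(Icc 1 (Nat.log 2 (a / j))) by simp]
  symm
  refine card_nbij' (fun k => 2 ^ k * j) (fun m => m.factorization 2) ?_ ?_ ?_ ?_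
  · intro k hk
    simp only [coe_Icc, Set.mem_Icc] at hk
    have hdiv : a / j ≠ 0 := by
      intro h
      rw [h, Nat.log_zero_right] at hk
      omega
    have hle : 2 ^ k * j ≤ a := (Nat.le_div_iff_mul_le hj0).mp (Nat.pow_le_of_le_log hdiv hk.2)
    simp only [mem_coe, mem_filter, mem_Icc]
    refine ⟨⟨⟨Nat.one_le_iff_ne_zero.mpr (by positivity), hle⟩, ?_⟩,
      Nat.ordCompl_pow_mul_of_not_dvd k Nat.prime_two hj2⟩
    exact (dvd_pow_self 2 (by omega)).mul_right j
  · intro m hm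
    simp only [mem_coe, mem_filter, mem_Icc] at hm
    obtain ⟨⟨⟨hm1, hma⟩, hm2⟩, hmj⟩ := hm
    have hm : 2 ^ m.factorization 2 * j = m := hmj ▸ Nat.ordProj_mul_ordCompl_eq_self m 2
    simp only [coe_Icc, Set.mem_Icc]
    refine ⟨Nat.prime_two.factorization_pos_of_dvd (by omega) hm2, ?_⟩
    exact Nat.le_log_of_pow_le one_lt_two ((Nat.le_div_iff_mul_le hj0).mpr (by rwa [hm]))
  · intro k _
    exact factorization_two_pow_mul_of_odd k hj
  · intro m hm
    simp only [mem_coe, mem_filter] at hm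
    exact hm.2 ▸ Nat.ordProj_mul_ordCompl_eq_self m 2

lemma sum_log_two_div_odd (a : ℕ) :
    ∑ j ∈ {j ∈ Icc 1 a | Odd j}, Nat.log 2 (a / j) = a / 2 := by
  have hIcc : Icc 1 a = Ioc 0 a := rfl
  rw [← Nat.Ioc_filter_dvd_card_eq_div a 2, ← hIcc,
    card_eq_sum_card_fiberwise (f := fun m => ordCompl[2] m) (t := {j ∈ Icc 1 a | Odd j})]
  · exact sum_congr rfl fun j hj => (card_filter_ordCompl_two_eq_of_odd (mem_filter.mp hj).2).symm
  · intro m hm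
    simp only [mem_coe, mem_filter, mem_Icc] at hm ⊢
    have hm0 : m ≠ 0 := by omega
    refine ⟨⟨Nat.ordCompl_pos 2 hm0, (Nat.ordCompl_le m 2).trans hm.1.2⟩, ?_⟩
    exact Nat.odd_iff.mpr (Nat.two_dvd_ne_zero.mp (Nat.not_dvd_ordCompl Nat.prime_two hm0))

lemma floor_logb_two_natCast_div {a j : ℕ} (hj : 0 < j) (hja : j ≤ a) :
    ⌊Real.logb 2 ((a : ℝ) / j)⌋ = Nat.log 2 (a / j) := by
  have hr : (1 : ℝ) ≤ a / j := by
    rw [one_le_div (by exact_mod_cast hj)]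
    exact_mod_cast hja
  rw [← Nat.cast_ofNat, Real.floor_logb_natCast (zero_le_one.trans hr),
    Int.log_of_one_le_right 2 hr, Nat.floor_div_natCast, Nat.floor_natCast]

theorem stmt_7_general (a : ℕ) (hodd : Odd a) :
    ((∑ j ∈ (Finset.Icc 1 a).filter (fun j => Odd j),
        (⌊Real.log ((a : ℝ) / (j : ℝ)) / Real.log 2⌋ : ℝ)) =
      ∑ j ∈ (Finset.Icc 1 a).filter (fun j => Odd j),
        (Real.log ((a : ℝ) / (j : ℝ)) / Real.log 2 -
          Int.fract (Real.log ((a : ℝ) / (j : ℝ)) / Real.log 2))) ∧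
    Real.log 2 * (((a : ℝ) - 1) / 2) =
      (∑ j ∈ (Finset.Icc 1 a).filter (fun j => Odd j), Real.log ((a : ℝ) / (j : ℝ))) -
        Real.log 2 * ∑ j ∈ (Finset.Icc 1 a).filter (fun j => Odd j),
          Int.fract (Real.log ((a : ℝ) / (j : ℝ)) / Real.log 2) := by
  have hfloor : ∀ x : ℝ, (⌊x⌋ : ℝ) = x - Int.fract x := fun x => (Int.self_sub_fract x).symm
  have hhalf : ((a / 2 : ℕ) : ℝ) = ((a : ℝ) - 1) / 2 := by
    obtain ⟨t, rfl⟩ := hodd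
    rw [show (2 * t + 1) / 2 = t by omega]
    push_cast
    ring
  have hsum : ∑ j ∈ {j ∈ Icc 1 a | Odd j}, (⌊Real.log ((a : ℝ) / j) / Real.log 2⌋ : ℝ) =
      ((a : ℝ) - 1) / 2 := by
    rw [← hhalf, ← sum_log_two_div_odd a, Nat.cast_sum]
    refine sum_congr rfl fun j hj => ?_
    obtain ⟨hj1, hja⟩ := mem_Icc.mp (mem_filter.mp hj).1
    rw [Real.log_div_log, floor_logb_two_natCast_div hj1 hja, Int.cast_natCast]
  refine ⟨sum_congr rfl fun j _ => hfloor _, ?_⟩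
  simp_rw [hfloor] at hsum
  have hlog2 : Real.log 2 ≠ 0 := (Real.log_pos one_lt_two).ne'
  rw [← hsum, sum_sub_distrib, ← sum_div, mul_sub, mul_div_cancel₀ _ hlog2]

theorem stmt_7 (a : ℕ) (ha : 0 < a) (hodd : Odd a) :
    ((∑ j ∈ (Finset.Icc 1 a).filter (fun j => Odd j),
        (⌊Real.log ((a : ℝ) / (j : ℝ)) / Real.log 2⌋ : ℝ)) =
      ∑ j ∈ (Finset.Icc 1 a).filter (fun j => Odd j),
        (Real.log ((a : ℝ) / (j : ℝ)) / Real.log 2 -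
          Int.fract (Real.log ((a : ℝ) / (j : ℝ)) / Real.log 2))) ∧
    Real.log 2 * (((a : ℝ) - 1) / 2) =
      (∑ j ∈ (Finset.Icc 1 a).filter (fun j => Odd j), Real.log ((a : ℝ) / (j : ℝ))) -
        Real.log 2 * ∑ j ∈ (Finset.Icc 1 a).filter (fun j => Odd j),
          Int.fract (Real.log ((a : ℝ) / (j : ℝ)) / Real.log 2) :=
  stmt_7_general a hodd
end
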